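/- Let D be a distribution on X × {0,1} that is realizable, i.e., there is f* : X → {0,1} with Pr_{(x,y)∼D}[y = f*(x)] = 1. Let f : X → {0,1} and set q = Pr_{(x,y)∼D}[f(x) ≠ f*(x)] = L(f). For a bag of k ≥ 1 i.i.d. draws (x_1,y_1),…,(x_k,y_k) from D with α = (1/k)·Σ_{j=1}^k y_j, one has Pr[(1/k)·Σ_{j=1}^k f(x_j) ≠ α] ≥ Pr[the number of indices j with f(x_j) ≠ f*(x_j) is odd] = 1/2 − (1/2)·(1 − 2q)^k. -/
import Mathlib


open MeasureTheory Finset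
open scoped ENNReal NNReal

noncomputable section

namespace LLP

/-- Real value of a Boolean label/prediction (`0` or `1`). -/
def bval (b : Bool) : ℝ := if b then 1 else 0

/-- Label proportion `α` of a bag of `k` labeled examples. -/
def labelProp {X : Type*} {k : ℕ} (bag : Fin k → X × Bool) : ℝ :=
  (∑ j, bval (bag j).2) / (k : ℝ)

/-- Average prediction `(1/k)·Σ_j f(x_j)` of `f` on a bag. -/
def predProp {X : Type*} {k : ℕ} (f : X → Bool) (bag : Fin k → X × Bool) : ℝ :=
  (∑ j, bval (f (bag j).1)) / (k : ℝ)

/-- Instance-level classification loss `L(f) = Pr_{(x,y)∼D}[f(x) ≠ y]`. -/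
def err {X : Type*} [MeasurableSpace X] (D : Measure (X × Bool)) (f : X → Bool) : ℝ :=
  (D {p | f p.1 ≠ p.2}).toReal

/-- `S` is shattered by the Boolean-valued class `F`. -/
def Shatters {Z : Type*} (F : Set (Z → Bool)) (S : Finset Z) : Prop :=
  ∀ T ⊆ S, ∃ f ∈ F, ∀ z ∈ S, (f z = true ↔ z ∈ T)

/-- The VC dimension of `F` is at most `d`. -/
def VCDimLE {Z : Type*} (F : Set (Z → Bool)) (d : ℕ) : Prop :=
  ∀ S : Finset Z, Shatters F S → S.card ≤ d

/-- Joint distribution of `n` i.i.d. bags, each consisting of `k` i.i.d. draws from `D`. -/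
def bagMeasure {X : Type*} [MeasurableSpace X] (D : Measure (X × Bool)) (n k : ℕ) :
    Measure (Fin n → Fin k → X × Bool) :=
  Measure.pi fun _ => Measure.pi fun _ => D

/-- Empirical proportional (0-1) risk: fraction of bags whose predicted proportion
mismatches the observed label proportion. -/
def empPM {X : Type*} {n k : ℕ} (f : X → Bool) (ω : Fin n → Fin k → X × Bool) : ℝ :=
  (∑ i, if predProp f (ω i) = labelProp (ω i) then (0 : ℝ) else 1) / (n : ℝ)

/-- Empirical proportional square loss. -/
def empSQ {X : Type*} {n k : ℕ} (f : X → Bool) (ω : Fin n → Fin k → X × Bool) : ℝ :=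
  (∑ i, (predProp f (ω i) - labelProp (ω i)) ^ 2) / (n : ℝ)

/-- The EasyLLP estimate of the 0-1 loss on a single bag, using marginal label
proportion `p`. -/
def ellEZ {X : Type*} {k : ℕ} (p : ℝ) (f : X → Bool) (bag : Fin k → X × Bool) : ℝ :=
  ((k : ℝ) * (labelProp bag - p) + p) * (1 - predProp f bag)
    + ((k : ℝ) * (p - labelProp bag) + (1 - p)) * predProp f bag

/-- Marginal label proportion `p = Pr[y = 1]`. -/
def labelP {X : Type*} [MeasurableSpace X] (D : Measure (X × Bool)) : ℝ :=
  (D {q | q.2 = true}).toReal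

end LLP

private lemma parity_sum_aux (k : ℕ) (q : ℝ) :
    ∑ S ∈ (Finset.univ.filter fun S : Finset (Fin k) => Odd S.card),
      q ^ S.card * (1 - q) ^ (k - S.card) = 1/2 - 1/2 * (1 - 2*q)^k := by
  classical
  have h1 : ∑ S : Finset (Fin k), q ^ S.card * (1 - q) ^ (k - S.card) = 1 := by
    have := Finset.prod_add (fun _ : Fin k => q) (fun _ => 1 - q) Finset.univ
    simp only [Finset.prod_const, Finset.powerset_univ, Finset.card_sdiff_of_subset (Finset.subset_univ _),
      Finset.card_univ, Fintype.card_fin] at this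
    rw [← this]
    simp
  have h2 : ∑ S : Finset (Fin k), (-1 : ℝ) ^ S.card * (q ^ S.card * (1 - q) ^ (k - S.card))
      = (1 - 2*q)^k := by
    have := Finset.prod_add (fun _ : Fin k => -q) (fun _ => 1 - q) Finset.univ
    simp only [Finset.prod_const, Finset.powerset_univ, Finset.card_sdiff_of_subset (Finset.subset_univ _),
      Finset.card_univ, Fintype.card_fin] at this
    rw [show (1 : ℝ) - 2*q = -q + (1 - q) by ring, this]
    apply Finset.sum_congr rfl
    intro S _
    rw [neg_pow]
    ring
  have key : 2 * ∑ S ∈ (Finset.univ.filter fun S : Finset (Fin k) => Odd S.card),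
      q ^ S.card * (1 - q) ^ (k - S.card)
      = (∑ S : Finset (Fin k), q ^ S.card * (1 - q) ^ (k - S.card))
        - ∑ S : Finset (Fin k), (-1 : ℝ) ^ S.card * (q ^ S.card * (1 - q) ^ (k - S.card)) := by
    rw [Finset.sum_filter, Finset.mul_sum, ← Finset.sum_sub_distrib]
    apply Finset.sum_congr rfl
    intro S _
    by_cases h : Odd S.card
    · rw [if_pos h, h.neg_one_pow]; ring
    · rw [if_neg h, (Nat.not_odd_iff_even.mp h).neg_one_pow]; ring
  rw [h1, h2] at key
  linarith

namespace LLP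

/-- the parity lower bound for proportion mismatch, Eq. (4).
For a realizable distribution `D` with true labeler `f*`, a predictor `f` with
disagreement probability `q = Pr[f(x) ≠ f*(x)] = L(f)`, and a bag of `k ≥ 1` i.i.d.
draws, the probability that the predicted proportion differs from `α` is at least the
probability that the number of disagreement points in the bag is odd, which equals
`1/2 − (1/2)·(1 − 2q)^k`. -/
theorem parity_mismatch_lower_bound
    (X : Type*) [MeasurableSpace X] (D : Measure (X × Bool)) [IsProbabilityMeasure D]
    (fs f : X → Bool) (hfs : Measurable fs) (hf : Measurable f)
    (hreal : D {q : X × Bool | q.2 = fs q.1} = 1) (k : ℕ) (hk : 1 ≤ k) :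
    (D {q : X × Bool | f q.1 ≠ fs q.1}).toReal = err D f ∧
    ((Measure.pi fun _ : Fin k => D)
        {bag | Odd (univ.filter fun j => f (bag j).1 ≠ fs (bag j).1).card}).toReal =
      1 / 2 - (1 / 2) * (1 - 2 * (D {q : X × Bool | f q.1 ≠ fs q.1}).toReal) ^ k ∧
    ((Measure.pi fun _ : Fin k => D)
        {bag | Odd (univ.filter fun j => f (bag j).1 ≠ fs (bag j).1).card}).toReal ≤
      ((Measure.pi fun _ : Fin k => D)
        {bag | predProp f bag ≠ labelProp bag}).toReal := by
  classical
  set A : Set (X × Bool) := {q : X × Bool | f q.1 ≠ fs q.1} with hA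
  have hmA : MeasurableSet A := by
    have : A = (fun q : X × Bool => (f q.1, fs q.1)) ⁻¹' {p : Bool × Bool | p.1 ≠ p.2} := rfl
    rw [this]
    exact ((hf.comp measurable_fst).prodMk (hfs.comp measurable_fst))
      ((Set.toFinite _).measurableSet)
  have hmG0 : MeasurableSet {q : X × Bool | q.2 = fs q.1} := by
    have : {q : X × Bool | q.2 = fs q.1}
        = (fun q : X × Bool => (q.2, fs q.1)) ⁻¹' {p : Bool × Bool | p.1 = p.2} := rfl
    rw [this]
    exact ((measurable_snd).prodMk (hfs.comp measurable_fst))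
      ((Set.toFinite _).measurableSet)
  have hG0c : D {q : X × Bool | q.2 = fs q.1}ᶜ = 0 := by
    rw [measure_compl hmG0 (measure_ne_top _ _), hreal, measure_univ, tsub_self]
  have hae : ∀ᵐ q ∂D, q.2 = fs q.1 := by
    rw [ae_iff]
    exact hG0c
  -- Part 1
  have part1 : (D A).toReal = err D f := by
    have : D A = D {p : X × Bool | f p.1 ≠ p.2} := by
      apply measure_congr
      filter_upwards [hae] with q hq
      change (f q.1 ≠ fs q.1) = (f q.1 ≠ q.2)
      rw [eq_iff_iff]
      rw [hq]
    rw [err, this]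
  -- notation for the product measure
  set μk : Measure (Fin k → X × Bool) := Measure.pi fun _ : Fin k => D with hμk
  set q0 : ℝ := (D A).toReal with hq0
  have hDA1 : D A ≤ 1 := (measure_mono (Set.subset_univ _)).trans_eq measure_univ
  have hAc : (D Aᶜ).toReal = 1 - q0 := by
    rw [measure_compl hmA (measure_ne_top _ _), measure_univ,
      ENNReal.toReal_sub_of_le hDA1 ENNReal.one_ne_top, ENNReal.toReal_one]
  -- the parity event as a disjoint union
  set S0 : (Fin k → X × Bool) → Finset (Fin k) :=
    fun bag => univ.filter fun j => f (bag j).1 ≠ fs (bag j).1 with hS0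
  set E : Finset (Fin k) → Set (Fin k → X × Bool) :=
    fun S => Set.pi Set.univ (fun j => if j ∈ S then A else Aᶜ) with hE
  have hmemE : ∀ (S : Finset (Fin k)) (bag : Fin k → X × Bool), bag ∈ E S ↔ S = S0 bag := by
    intro S bag
    constructor
    · intro h
      ext j
      have hj := h j (Set.mem_univ j)
      dsimp only at hj
      by_cases hjS : j ∈ S
      · rw [if_pos hjS] at hj
        simp only [hA, Set.mem_setOf_eq] at hj
        simp [hS0, hjS, hj]
      · rw [if_neg hjS] at hj
        simp only [Set.mem_compl_iff, hA, Set.mem_setOf_eq, not_not] at hj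
        simp [hS0, hjS, hj]
    · rintro rfl
      intro j _
      dsimp only
      by_cases hj : f (bag j).1 ≠ fs (bag j).1
      · rw [if_pos (by simp [hS0, hj])]
        exact hj
      · rw [if_neg (by simp [hS0, hj])]
        simpa [hA] using hj
  have hmE : ∀ S : Finset (Fin k), MeasurableSet (E S) := by
    intro S
    apply MeasurableSet.pi (Set.countable_univ)
    intro j _
    by_cases hj : j ∈ S
    · rw [if_pos hj]; exact hmA
    · rw [if_neg hj]; exact hmA.compl
  set T : Finset (Finset (Fin k)) := univ.filter fun S => Odd S.card with hT
  have hUnion : {bag : Fin k → X × Bool | Odd (S0 bag).card} = ⋃ S ∈ T, E S := by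
    ext bag
    simp only [Set.mem_setOf_eq, Set.mem_iUnion, hT, Finset.mem_filter, Finset.mem_univ, true_and]
    constructor
    · intro h
      exact ⟨S0 bag, h, (hmemE _ _).mpr rfl⟩
    · rintro ⟨S, hSodd, hSE⟩
      rwa [(hmemE _ _).mp hSE] at hSodd
  have hEmeas : ∀ S : Finset (Fin k), μk (E S) = (D A) ^ S.card * (D Aᶜ) ^ (k - S.card) := by
    intro S
    rw [hμk, hE, Measure.pi_pi]
    rw [show (fun j => D (if j ∈ S then A else Aᶜ)) = fun j => if j ∈ S then D A else D Aᶜ by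
      funext j; split_ifs <;> rfl]
    rw [Finset.prod_ite, Finset.prod_const, Finset.prod_const]
    congr 1
    · congr 1
      simp
    · congr 1
      rw [show (univ.filter fun j => ¬ j ∈ S) = Sᶜ from by ext j; simp, Finset.card_compl, Fintype.card_fin]
  have hOddMeas : μk {bag : Fin k → X × Bool | Odd (S0 bag).card}
      = ∑ S ∈ T, (D A) ^ S.card * (D Aᶜ) ^ (k - S.card) := by
    rw [hUnion, measure_biUnion_finset ?_ (fun S _ => hmE S)]
    · exact Finset.sum_congr rfl fun S _ => hEmeas S
    · intro S hS S' hS' hne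
      simp only [Function.onFun]
      rw [Set.disjoint_left]
      intro bag hb hb'
      exact hne (((hmemE _ _).mp hb).trans ((hmemE _ _).mp hb').symm)
  -- Part 2
  have part2 : (μk {bag : Fin k → X × Bool | Odd (S0 bag).card}).toReal
      = 1 / 2 - (1 / 2) * (1 - 2 * q0) ^ k := by
    rw [hOddMeas, ENNReal.toReal_sum (fun S _ => by
      exact ENNReal.mul_ne_top (ENNReal.pow_ne_top (measure_ne_top _ _))
        (ENNReal.pow_ne_top (measure_ne_top _ _)))]
    have : ∀ S ∈ T, ((D A) ^ S.card * (D Aᶜ) ^ (k - S.card)).toReal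
        = q0 ^ S.card * (1 - q0) ^ (k - S.card) := by
      intro S _
      rw [ENNReal.toReal_mul, ENNReal.toReal_pow, ENNReal.toReal_pow, hAc]
    rw [Finset.sum_congr rfl this]
    have := parity_sum_aux k q0
    rw [hT]
    linarith [this]
  -- Part 3
  have part3 : (μk {bag : Fin k → X × Bool | Odd (S0 bag).card}).toReal ≤
      (μk {bag : Fin k → X × Bool | predProp f bag ≠ labelProp bag}).toReal := by
    apply ENNReal.toReal_mono (measure_ne_top _ _)
    apply measure_mono_ae
    have hGfull : μk (Set.pi Set.univ fun _ : Fin k => {q : X × Bool | q.2 = fs q.1}) = 1 := by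
      rw [hμk, Measure.pi_pi]
      simp [hreal]
    have hGae : ∀ᵐ bag ∂μk, ∀ j : Fin k, (bag j).2 = fs (bag j).1 := by
      have hcompl : μk (Set.pi Set.univ fun _ : Fin k => {q : X × Bool | q.2 = fs q.1})ᶜ = 0 := by
        rw [measure_compl (MeasurableSet.pi Set.countable_univ fun _ _ => hmG0)
          (measure_ne_top _ _), hGfull, measure_univ, tsub_self]
      rw [ae_iff]
      convert hcompl using 2
      ext bag
      simp [Set.mem_pi]
    filter_upwards [hGae] with bag hbag hodd
    replace hodd : Odd (S0 bag).card := hodd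
    show predProp f bag ≠ labelProp bag
    -- the integer difference
    set z : Fin k → ℤ := fun j => (if f (bag j).1 then 1 else 0) - (if (bag j).2 then 1 else 0)
      with hz
    have hcast : predProp f bag - labelProp bag = ((∑ j, z j : ℤ) : ℝ) / (k : ℝ) := by
      rw [predProp, labelProp, div_sub_div_same]
      congr 1
      rw [← Finset.sum_sub_distrib]
      push_cast
      apply Finset.sum_congr rfl
      intro j _
      rw [hz]
      simp only [bval]
      split_ifs <;> norm_num
    have hZodd : ((∑ j, z j : ℤ) : ZMod 2) = 1 := by
      push_cast
      have : ∀ j : Fin k, ((z j : ZMod 2)) = if f (bag j).1 ≠ fs (bag j).1 then 1 else 0 := by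
        intro j
        simp only [hz, hbag j]
        cases hfj : f (bag j).1 <;> cases hfsj : fs (bag j).1 <;>
          simp [hfj, hfsj] <;> decide
      rw [Finset.sum_congr rfl fun j _ => this j, Finset.sum_boole]
      obtain ⟨m, hm⟩ := hodd
      rw [hS0] at hm
      rw [hm]
      push_cast
      rw [show ((2 : ZMod 2)) = 0 by decide]
      ring
    intro heq
    have hdiff : ((∑ j, z j : ℤ) : ℝ) / (k : ℝ) = 0 := by rw [← hcast, heq, sub_self]
    have hk0 : (k : ℝ) ≠ 0 := Nat.cast_ne_zero.mpr (by omega)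
    have hZ0 : (∑ j, z j : ℤ) = 0 := by
      have := (div_eq_zero_iff.mp hdiff).resolve_right hk0
      exact_mod_cast this
    rw [hZ0] at hZodd
    exact absurd hZodd (by decide)
  exact ⟨part1, by rw [← hμk] at *; exact ⟨part2, part3⟩⟩


end LLP
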